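/- Let F : ℝⁿ × ℝᵏ → ℝ be a differentiable generating function with contour L_F ⊆ J¹(ℝⁿ,ℝ). Then T(L_F) is the contour of the generating function F_T : ℝⁿ × (ℝⁿ × ℝᵏ) → ℝ defined by F_T(q,(v,w)) := ⟨q,v⟩ − F(v,w), with base variable q and fiber variables (v,w); that is, T(L_F) = L_{F_T}. -/

import Mathlib

noncomputable section

/-- The transformation T(u,q,p) = (⟨q,p⟩ − u, p, q) on J¹(ℝⁿ,ℝ) = ℝ × ℝⁿ × ℝⁿ. -/
def Tmap {E : Type*} [NormedAddCommGroup E] [InnerProductSpace ℝ E]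
    (x : ℝ × E × E) : ℝ × E × E :=
  ((inner ℝ x.2.1 x.2.2 : ℝ) - x.1, x.2.2, x.2.1)

/-- The contour L_F of a generating function F : ℝⁿ × ℝᵏ → ℝ with base variable q and
fiber variable w: L_F = {(F(q,w), q, ∇_q F(q,w)) | ∇_w F(q,w) = 0}. -/
def gfContour {n k : ℕ}
    (F : EuclideanSpace ℝ (Fin n) × EuclideanSpace ℝ (Fin k) → ℝ) :
    Set (ℝ × EuclideanSpace ℝ (Fin n) × EuclideanSpace ℝ (Fin n)) :=
  {x | ∃ q w, gradient (fun w' => F (q, w')) w = 0 ∧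
    x = (F (q, w), q, gradient (fun q' => F (q', w)) q)}

/-- The contour of a generating function F : ℝⁿ × (ℝᵐ × ℝᵏ) → ℝ with base variable q
and fiber variables (v,w): the fiber gradient vanishes iff both partial fiber
gradients vanish. -/
def gfContour2 {n m k : ℕ}
    (F : EuclideanSpace ℝ (Fin n) × (EuclideanSpace ℝ (Fin m) × EuclideanSpace ℝ (Fin k)) → ℝ) :
    Set (ℝ × EuclideanSpace ℝ (Fin n) × EuclideanSpace ℝ (Fin n)) :=
  {x | ∃ q v w, gradient (fun v' => F (q, (v', w))) v = 0 ∧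
    gradient (fun w' => F (q, (v, w'))) w = 0 ∧
    x = (F (q, (v, w)), q, gradient (fun q' => F (q', (v, w))) q)}

open InnerProductSpace

section Gradient

variable {E : Type*} [NormedAddCommGroup E] [InnerProductSpace ℝ E] [CompleteSpace E]

theorem hasGradientAt_inner_left (a x : E) : HasGradientAt (fun y => ⟪a, y⟫_ℝ) a x :=
  hasGradientAt_iff_hasFDerivAt.2 (toDual ℝ E a).hasFDerivAt

theorem hasGradientAt_inner_right (a x : E) : HasGradientAt (fun y => ⟪y, a⟫_ℝ) a x := by
  simpa only [real_inner_comm a] using hasGradientAt_inner_left a x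

theorem HasGradientAt.sub {f g : E → ℝ} {f' g' x : E} (hf : HasGradientAt f f' x)
    (hg : HasGradientAt g g' x) : HasGradientAt (fun y => f y - g y) (f' - g') x := by
  rw [hasGradientAt_iff_hasFDerivAt, map_sub] at *
  exact hf.sub hg

theorem gradient_inner_left_sub {f : E → ℝ} {x : E} (a : E) (hf : DifferentiableAt ℝ f x) :
    gradient (fun y => ⟪a, y⟫_ℝ - f y) x = a - gradient f x :=
  ((hasGradientAt_inner_left a x).sub hf.hasGradientAt).gradient

theorem gradient_inner_right_sub_const (a x : E) (c : ℝ) :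
    gradient (fun y => ⟪y, a⟫_ℝ - c) x = a := by
  simpa only [sub_zero] using ((hasGradientAt_inner_right a x).sub (hasGradientAt_const x c)).gradient

theorem gradient_const_sub (f : E → ℝ) (c : ℝ) (x : E) :
    gradient (fun y => c - f y) x = -gradient f x := by
  simp only [gradient, fderiv_const_sub, map_neg]

end Gradient

/-- If F : ℝⁿ × ℝᵏ → ℝ is a differentiable generating function, then T(L_F) is the
contour of F_T(q,(v,w)) = ⟨q,v⟩ − F(v,w), with base variable q and fiber
variables (v,w): T(L_F) = L_{F_T}. -/
theorem stmt12 (n k : ℕ)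
    (F : EuclideanSpace ℝ (Fin n) × EuclideanSpace ℝ (Fin k) → ℝ)
    (hF : Differentiable ℝ F) :
    Tmap '' (gfContour F)
      = gfContour2 (fun x => (inner ℝ x.1 x.2.1 : ℝ) - F (x.2.1, x.2.2)) := by
  have hF_left (v w) : DifferentiableAt ℝ (fun v' => F (v', w)) v :=
    (hF _).comp v (differentiableAt_id.prodMk (differentiableAt_const w))
  ext x
  constructor
  · rintro ⟨_, ⟨v, w, hw, rfl⟩, rfl⟩
    refine ⟨gradient (fun v' => F (v', w)) v, v, w, ?_, ?_, ?_⟩ <;> dsimp only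
    · rw [gradient_inner_left_sub _ (hF_left v w), sub_self]
    · rw [gradient_const_sub, hw, neg_zero]
    · rw [gradient_inner_right_sub_const, Tmap, real_inner_comm]
  · rintro ⟨q, v, w, hv, hw, rfl⟩
    dsimp only at hv hw ⊢
    rw [gradient_inner_left_sub _ (hF_left v w), sub_eq_zero] at hv
    rw [gradient_const_sub, neg_eq_zero] at hw
    refine ⟨_, ⟨v, w, hw, rfl⟩, ?_⟩
    rw [gradient_inner_right_sub_const, Tmap, real_inner_comm, hv]
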